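/- arXiv:1502.04152 — 3 statements merged into one kernel-verified Lean document; each statement's English description precedes it below -/
import Mathlib

section
/- Let p be a prime and s > 1 an integer, and set q = p^{s-1}. Let F ∈ F_p[[x,y]] be the Honda formal group law of height s. Then F lies in F_p[x][[y]]; that is, writing F(x,y) = Σ_{l≥0} A_l(x) y^l with A_l(x) ∈ F_p[[x]], each power series A_l(x) is in fact a polynomial in x (it has only finitely many nonzero coefficients). -/
open MvPowerSeries Finsupp
open scoped Classical

/-- Substitution of a multivariate power series (with zero constant term)
into a one-variable power series. -/
noncomputable def substPS {σ R : Type*} [CommRing R]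
    (g : MvPowerSeries σ R) (f : PowerSeries R) : MvPowerSeries σ R :=
  fun d => ∑ n ∈ Finset.range (d.sum (fun _ k => k) + 1),
    PowerSeries.coeff n f * MvPowerSeries.coeff d (g ^ n)

/-- Substitution of a pair of power series (with zero constant terms) into a
two-variable power series `F`, i.e. `F(a, b)`. -/
noncomputable def subst2 {σ R : Type*} [CommRing R]
    (a b : MvPowerSeries σ R) (F : MvPowerSeries (Fin 2) R) : MvPowerSeries σ R :=
  fun d => ∑ i ∈ Finset.range (d.sum (fun _ k => k) + 1),
    ∑ j ∈ Finset.range (d.sum (fun _ k => k) + 1),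
      MvPowerSeries.coeff (Finsupp.single (0 : Fin 2) i + Finsupp.single 1 j) F *
        MvPowerSeries.coeff d (a ^ i * b ^ j)

/-- The Honda logarithm `l(x) = Σ_{i ≥ 0} p^{-i} x^{p^{s i}}` over `ℚ_p`. -/
noncomputable def hondaLog (p s : ℕ) [Fact p.Prime] : PowerSeries ℚ_[p] :=
  PowerSeries.mk fun n =>
    if h : ∃ i, n = p ^ (s * i) then (p : ℚ_[p]) ^ (-(Nat.find h : ℤ)) else 0

/-- `F ∈ 𝔽_p[[x,y]]` is the Honda formal group law of height `s`:  it is the coefficientwise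
mod `p` reduction of the (unique) power series `F₀` with coefficients in `ℤ_p` and zero
constant term satisfying `l(F₀(x,y)) = l(x) + l(y)` over `ℚ_p`, where `l` is the Honda
logarithm `l(x) = Σ_{i ≥ 0} p^{-i} x^{p^{s i}}`. -/
def IsHondaFGL (p : ℕ) [Fact p.Prime] (s : ℕ) (F : MvPowerSeries (Fin 2) (ZMod p)) : Prop :=
  ∃ F₀ : MvPowerSeries (Fin 2) ℤ_[p],
    MvPowerSeries.constantCoeff F₀ = 0 ∧
    substPS (MvPowerSeries.map (PadicInt.Coe.ringHom (p := p)) F₀) (hondaLog p s) =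
      substPS (MvPowerSeries.X 0) (hondaLog p s) + substPS (MvPowerSeries.X 1) (hondaLog p s) ∧
    F = MvPowerSeries.map (PadicInt.toZMod (p := p)) F₀

/-!
Let `F₀ ∈ ℤ_p⟦x, y⟧` reduce to `F`, and let `A_l(x)` be its coefficient of `yˡ`. It suffices to
show that every `A_l` is restricted (its coefficients tend to `0` `p`-adically): then almost all of
them lie in `pℤ_p`. Putting `y = 0` in `ℓ(F₀) = ℓ(x) + ℓ(y)` gives `ℓ(A₀) = ℓ`, hence `A₀ = x`.
Write `F₀ = x + M` with `M(x, 0) = 0`; for `l ≥ 1`, Taylor's formula for the coefficient of `yˡ`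
gives `ℓ'(x) A_l = [yˡ] ℓ(y) - Σ_{2 ≤ k ≤ l} ℓ^[k](x) [yˡ] Mᵏ`, with `ℓ^[k]` the Hasse derivatives.
Since `p^{-j} (p^{sj} choose k)` has norm at most `p^{-(s-1)j} / ‖k‖`, for `s ≥ 2` every `ℓ^[k]`
with `k ≥ 1` is restricted, and `[yˡ] Mᵏ` only involves `A₁, …, A_{l-1}`; so by induction the right
side is restricted. Finally `ℓ'(x) ≡ 1` modulo coefficients of norm `≤ 1/p`, and dividing by such
a series preserves restrictedness of a series with integral coefficients.
-/

open scoped PowerSeries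

namespace HondaFGL

open Filter Topology Finset.HasAntidiagonal

section TwoVariableSeries

variable {R : Type*} [CommRing R]

lemma eq_single_add_single (d : Fin 2 →₀ ℕ) : d = single 0 (d 0) + single 1 (d 1) := by
  ext a
  fin_cases a <;> simp

lemma single_add_single_eq_iff {i l i' l' : ℕ} :
    single (0 : Fin 2) i + single 1 l = single 0 i' + single 1 l' ↔ i = i' ∧ l = l' :=
  ⟨fun h => ⟨by simpa using congrArg (· 0) h, by simpa using congrArg (· 1) h⟩,
    by rintro ⟨rfl, rfl⟩; rfl⟩

/-- The coefficient of `yˡ` in `H(x, y)` (variable `0` is `x`, variable `1` is `y`), as a power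
series in `x`. -/
noncomputable def coeffY (l : ℕ) : MvPowerSeries (Fin 2) R →ₗ[R] R⟦X⟧ where
  toFun H := PowerSeries.mk fun i => MvPowerSeries.coeff (single 0 i + single 1 l) H
  map_add' H K := by ext; simp
  map_smul' a H := by ext; simp

@[simp]
lemma coeff_coeffY (l i : ℕ) (H : MvPowerSeries (Fin 2) R) :
    PowerSeries.coeff i (coeffY l H) = MvPowerSeries.coeff (single 0 i + single 1 l) H := by
  simp [coeffY]

lemma coeffY_mul (l : ℕ) (H K : MvPowerSeries (Fin 2) R) :
    coeffY l (H * K) = ∑ uv ∈ antidiagonal l, coeffY uv.1 H * coeffY uv.2 K := by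
  ext i
  simp only [coeff_coeffY, MvPowerSeries.coeff_mul, map_sum, PowerSeries.coeff_mul,
    Finset.sum_sigma']
  refine Finset.sum_nbij' (fun d => ⟨(d.1 1, d.2 1), (d.1 0, d.2 0)⟩)
    (fun e => (single 0 e.2.1 + single 1 e.1.1, single 0 e.2.2 + single 1 e.1.2))
    ?_ ?_ ?_ ?_ ?_
  · rintro ⟨d₁, d₂⟩ h
    replace h := mem_antidiagonal.1 h
    rw [Finset.mem_sigma, mem_antidiagonal, mem_antidiagonal]
    exact ⟨by simpa using congrArg (· 1) h, by simpa using congrArg (· 0) h⟩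
  · rintro ⟨⟨u, v⟩, ⟨a, b⟩⟩ h
    dsimp only at h ⊢
    rw [Finset.mem_sigma, mem_antidiagonal, mem_antidiagonal] at h
    rw [mem_antidiagonal, ← h.1, ← h.2]
    ext x
    fin_cases x <;> simp
  · rintro ⟨d₁, d₂⟩ -
    simp only [← eq_single_add_single]
  · rintro ⟨⟨u, v⟩, ⟨a, b⟩⟩ -
    simp
  · rintro ⟨d₁, d₂⟩ -
    simp only [← eq_single_add_single]

lemma coeffY_zero_mul (H K : MvPowerSeries (Fin 2) R) :
    coeffY 0 (H * K) = coeffY 0 H * coeffY 0 K := by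
  simp [coeffY_mul]

lemma coeffY_one (l : ℕ) : coeffY l (1 : MvPowerSeries (Fin 2) R) = if l = 0 then 1 else 0 := by
  ext i
  rw [coeff_coeffY, MvPowerSeries.coeff_one]
  split_ifs <;> simp_all [PowerSeries.coeff_one]

lemma coeffY_zero_pow (H : MvPowerSeries (Fin 2) R) (n : ℕ) :
    coeffY 0 (H ^ n) = coeffY 0 H ^ n := by
  induction n with
  | zero => simp [coeffY_one]
  | succ n ih => rw [pow_succ, coeffY_zero_mul, ih, pow_succ]

lemma coeffY_X_zero_pow (l a : ℕ) :
    coeffY l (X 0 ^ a : MvPowerSeries (Fin 2) R) = if l = 0 then PowerSeries.X ^ a else 0 := by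
  ext i
  rw [coeff_coeffY, MvPowerSeries.coeff_X_pow]
  have key : single (0 : Fin 2) i + single 1 l = single 0 a ↔ i = a ∧ l = 0 := by
    rw [← add_zero (single 0 a), ← single_zero (1 : Fin 2), single_add_single_eq_iff]
  simp only [key]
  by_cases hl : l = 0 <;> simp [hl, PowerSeries.coeff_X_pow, eq_comm]

lemma coeffY_X_zero_pow_mul (l a : ℕ) (H : MvPowerSeries (Fin 2) R) :
    coeffY l (X 0 ^ a * H) = PowerSeries.X ^ a * coeffY l H := by
  rw [coeffY_mul, Finset.Nat.sum_antidiagonal_eq_sum_range_succ_mk, Finset.sum_range_succ']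
  simp [coeffY_X_zero_pow]

lemma coeffY_pow_eq_zero {M : MvPowerSeries (Fin 2) R} (hM : coeffY 0 M = 0) {l k : ℕ}
    (hlk : l < k) : coeffY l (M ^ k) = 0 := by
  induction k generalizing l with
  | zero => omega
  | succ k ih =>
    rw [pow_succ, coeffY_mul]
    refine Finset.sum_eq_zero fun ⟨u, v⟩ huv => ?_
    rw [mem_antidiagonal] at huv
    obtain rfl | hv := Nat.eq_zero_or_pos v
    · rw [hM, mul_zero]
    · rw [ih (by omega), zero_mul]

lemma sum_single_add_single (i l : ℕ) :
    (single (0 : Fin 2) i + single 1 l).sum (fun _ k => k) = i + l := by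
  rw [sum_add_index' (fun _ => rfl) (fun _ _ _ => rfl), sum_single_index rfl,
    sum_single_index rfl]

lemma coeff_substPS {σ : Type*} (g : MvPowerSeries σ R) (f : R⟦X⟧) (d : σ →₀ ℕ) :
    MvPowerSeries.coeff d (substPS g f) = ∑ n ∈ Finset.range (d.sum (fun _ k => k) + 1),
      PowerSeries.coeff n f * MvPowerSeries.coeff d (g ^ n) :=
  rfl

lemma coeff_substPS_univariate (g f : R⟦X⟧) (i : ℕ) :
    PowerSeries.coeff i (substPS g f) =
      ∑ n ∈ Finset.range (i + 1), PowerSeries.coeff n f * PowerSeries.coeff i (g ^ n) := by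
  rw [← PowerSeries.coeff_coeToMvPowerSeries, coeff_substPS, sum_single_index rfl]
  rfl

lemma coeff_coeffY_substPS (H : MvPowerSeries (Fin 2) R) (f : R⟦X⟧) (l i : ℕ) :
    PowerSeries.coeff i (coeffY l (substPS H f)) =
      ∑ n ∈ Finset.range (i + l + 1), PowerSeries.coeff n f *
        PowerSeries.coeff i (coeffY l (H ^ n)) := by
  simp only [coeff_coeffY, coeff_substPS, sum_single_add_single]

lemma substPS_X (f : R⟦X⟧) : substPS PowerSeries.X f = f := by
  ext i
  rw [coeff_substPS_univariate, Finset.sum_eq_single i]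
  · simp [PowerSeries.coeff_X_pow]
  · intro n _ hn
    simp [PowerSeries.coeff_X_pow, Ne.symm hn]
  · simp

lemma coeffY_zero_substPS (H : MvPowerSeries (Fin 2) R) (f : R⟦X⟧) :
    coeffY 0 (substPS H f) = substPS (coeffY 0 H) f := by
  ext i
  rw [coeff_coeffY_substPS, coeff_substPS_univariate]
  simp [coeffY_zero_pow]

lemma coeffY_substPS_X_one (f : R⟦X⟧) (l : ℕ) :
    coeffY l (substPS (X 1) f) = PowerSeries.C (PowerSeries.coeff l f) := by
  ext i
  have key (n : ℕ) : single (0 : Fin 2) i + single 1 l = single 1 n ↔ i = 0 ∧ l = n := by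
    rw [← zero_add (single 1 n), ← single_zero (0 : Fin 2), single_add_single_eq_iff]
  rw [coeff_coeffY_substPS, PowerSeries.coeff_C]
  simp only [coeff_coeffY, MvPowerSeries.coeff_X_pow, key, mul_ite, mul_one, mul_zero]
  by_cases hi : i = 0 <;> simp [hi]

lemma mul_dvd_pow_sub_pow {a b x y : R} (ha : x ∣ a) (hb : x ∣ b) (hab : y ∣ a - b) {n : ℕ}
    (hn : 2 ≤ n) : x * y ∣ a ^ n - b ^ n := by
  obtain ⟨n, rfl⟩ := Nat.exists_eq_add_of_le' (by omega : 1 ≤ n)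
  rw [show a ^ (n + 1) - b ^ (n + 1) = a * (a ^ n - b ^ n) + (a - b) * b ^ n by ring]
  exact dvd_add (mul_dvd_mul ha (hab.trans (sub_dvd_pow_sub_pow a b n)))
    (mul_comm x y ▸ mul_dvd_mul hab (dvd_pow hb (by omega)))

lemma eq_of_substPS_eq {f a b : R⟦X⟧} (hf : PowerSeries.coeff 1 f = 1)
    (ha : PowerSeries.constantCoeff a = 0) (hb : PowerSeries.constantCoeff b = 0)
    (h : substPS a f = substPS b f) : a = b := by
  have hXa : PowerSeries.X ∣ a := PowerSeries.X_dvd_iff.2 ha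
  have hXb : PowerSeries.X ∣ b := PowerSeries.X_dvd_iff.2 hb
  suffices hdvd : ∀ i, PowerSeries.X ^ (i + 1) ∣ a - b by
    ext i
    exact sub_eq_zero.1 (PowerSeries.X_pow_dvd_iff.1 (hdvd i) i (by omega))
  intro i
  induction i with
  | zero => simpa using dvd_sub hXa hXb
  | succ i ih =>
    have hcoeff : PowerSeries.coeff (i + 1) (a - b) = 0 := by
      have hi := congrArg (PowerSeries.coeff (i + 1)) h
      rw [coeff_substPS_univariate, coeff_substPS_univariate, ← sub_eq_zero,
        ← Finset.sum_sub_distrib] at hi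
      rwa [Finset.sum_eq_single 1, ← mul_sub, ← map_sub, pow_one, pow_one, hf, one_mul] at hi
      · intro n _ hn1
        obtain rfl | hn := Nat.eq_zero_or_pos n
        · simp
        have h2 : PowerSeries.X ^ (i + 1 + 1) ∣ a ^ n - b ^ n := by
          rw [pow_succ']
          exact mul_dvd_pow_sub_pow hXa hXb ih (by omega)
        rw [← mul_sub, ← map_sub, PowerSeries.X_pow_dvd_iff.1 h2 _ (by omega), mul_zero]
      · simp
    refine PowerSeries.X_pow_dvd_iff.2 fun m hm => ?_
    obtain hm | rfl := Nat.lt_succ_iff_lt_or_eq.1 hm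
    · exact PowerSeries.X_pow_dvd_iff.1 ih m hm
    · exact hcoeff

noncomputable def hasseDeriv (k : ℕ) (f : R⟦X⟧) : R⟦X⟧ :=
  PowerSeries.mk fun n => ((n + k).choose k : R) * PowerSeries.coeff (n + k) f

lemma coeff_hasseDeriv (k n : ℕ) (f : R⟦X⟧) :
    PowerSeries.coeff n (hasseDeriv k f) = ((n + k).choose k : R) * PowerSeries.coeff (n + k) f :=
  PowerSeries.coeff_mk _ _

@[simp]
lemma hasseDeriv_zero (f : R⟦X⟧) : hasseDeriv 0 f = f := by
  ext n
  simp [coeff_hasseDeriv]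

lemma coeff_coeffY_X_zero_add_pow (M : MvPowerSeries (Fin 2) R) (l n i : ℕ) :
    PowerSeries.coeff i (coeffY l ((X 0 + M) ^ n)) = ∑ k ∈ Finset.range (n + 1),
      n.choose k * if n - k ≤ i then PowerSeries.coeff (i - (n - k)) (coeffY l (M ^ k)) else 0 := by
  rw [add_comm, add_pow, map_sum, map_sum]
  refine Finset.sum_congr rfl fun k _ => ?_
  rw [mul_comm (M ^ k), mul_comm, ← nsmul_eq_mul, map_nsmul, coeffY_X_zero_pow_mul, map_nsmul,
    PowerSeries.coeff_X_pow_mul', nsmul_eq_mul]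

/-- Taylor's formula for `f(x + M(x, y))` in powers of `y`. -/
lemma coeffY_substPS_X_zero_add {M : MvPowerSeries (Fin 2) R} (hM : coeffY 0 M = 0)
    (f : R⟦X⟧) (l : ℕ) :
    coeffY l (substPS (X 0 + M) f) =
      ∑ k ∈ Finset.range (l + 1), hasseDeriv k f * coeffY l (M ^ k) := by
  ext i
  simp only [coeff_coeffY_substPS, coeff_coeffY_X_zero_add_pow, map_sum, Finset.mul_sum,
    Finset.sum_sigma']
  simp only [PowerSeries.coeff_mul, coeff_hasseDeriv, Finset.sum_sigma',
    Finset.Nat.sum_antidiagonal_eq_sum_range_succ_mk]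
  -- the term `(k, a)` on the right is the term `(n, k) = (a + k, k)` on the left
  symm
  refine Finset.sum_bij_ne_zero (fun x _ _ => ⟨x.2 + x.1, x.1⟩) ?_ ?_ ?_ ?_
  · rintro ⟨k, a⟩ hka -
    simp only [Finset.mem_sigma, Finset.mem_range] at hka ⊢
    omega
  · rintro ⟨k, a⟩ - - ⟨k', a'⟩ - - h
    simp only [Sigma.mk.injEq, heq_eq_eq] at h
    ext <;> simp <;> omega
  · rintro ⟨n, k⟩ hnk hne
    simp only [Finset.mem_sigma, Finset.mem_range] at hnk
    have hkl : k ≤ l := by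
      by_contra! hlk
      simp [coeffY_pow_eq_zero hM hlk] at hne
    have hki : n - k ≤ i := by
      by_contra hki
      simp [hki] at hne
    refine ⟨⟨k, n - k⟩, ?_, ?_, ?_⟩
    · simp only [Finset.mem_sigma, Finset.mem_range]
      omega
    · rw [if_pos hki] at hne
      rw [Nat.sub_add_cancel (by omega)]
      contrapose! hne
      linear_combination hne
    · simp only [Sigma.mk.injEq, heq_eq_eq, and_true]
      omega
  · rintro ⟨k, a⟩ hka -
    simp only [Finset.mem_sigma, Finset.mem_range] at hka
    simp only [Nat.add_sub_cancel, if_pos (show a ≤ i by omega)]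
    ring

lemma coeffY_substPS_X_zero (f : R⟦X⟧) (l : ℕ) :
    coeffY l (substPS (X 0) f) = if l = 0 then f else 0 := by
  have h := coeffY_substPS_X_zero_add (M := 0) (map_zero _) f l
  rw [add_zero] at h
  rw [h, Finset.sum_range_succ']
  simp [coeffY_one]

end TwoVariableSeries

section Restricted

variable {R : Type*} [NormedCommRing R]

lemma isRestricted_one_iff {f : R⟦X⟧} :
    PowerSeries.IsRestricted 1 f ↔ Tendsto (fun n => ‖PowerSeries.coeff n f‖) atTop (𝓝 0) := by
  simp [PowerSeries.isRestricted_iff']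

lemma isRestricted_one_of_eventually_le {f : R⟦X⟧} {C r : ℝ} (hr0 : 0 ≤ r) (hr1 : r < 1)
    (h : ∀ K : ℕ, ∀ᶠ n in atTop, ‖PowerSeries.coeff n f‖ ≤ C * r ^ K) :
    PowerSeries.IsRestricted 1 f := by
  rw [isRestricted_one_iff, NormedAddGroup.tendsto_nhds_zero]
  intro ε hε
  have hlim : Tendsto (fun K : ℕ => C * r ^ K) atTop (𝓝 0) := by
    simpa using (tendsto_pow_atTop_nhds_zero_of_lt_one hr0 hr1).const_mul C
  obtain ⟨K, hK⟩ := (hlim.eventually_lt_const hε).exists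
  filter_upwards [h K] with n hn
  rw [norm_norm]
  exact hn.trans_lt hK

lemma isRestricted_one_coe_trunc (N : ℕ) (f : R⟦X⟧) :
    PowerSeries.IsRestricted 1 (PowerSeries.trunc N f : R⟦X⟧) := by
  rw [isRestricted_one_iff]
  refine tendsto_const_nhds.congr' ?_
  filter_upwards [eventually_ge_atTop N] with n hn
  simp [PowerSeries.coeff_trunc, not_lt.2 hn]

variable [IsUltrametricDist R]

lemma isRestricted_one_of_isRestricted_mul {u f : R⟦X⟧} {r : ℝ} (hr0 : 0 < r) (hr1 : r < 1)
    (hu : PowerSeries.IsRestricted 1 u) (hu1 : ∀ n, ‖PowerSeries.coeff n (u - 1)‖ ≤ r)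
    (hf : ∀ n, ‖PowerSeries.coeff n f‖ ≤ 1) (huf : PowerSeries.IsRestricted 1 (u * f)) :
    PowerSeries.IsRestricted 1 f := by
  refine isRestricted_one_of_eventually_le (C := 1) hr0.le hr1 fun K => ?_
  induction K with
  | zero => exact Eventually.of_forall fun n => by simpa using hf n
  | succ K ih =>
    obtain ⟨N, hN⟩ := eventually_atTop.1 ih
    set w := u - 1
    set P : R⟦X⟧ := ((PowerSeries.trunc N f : Polynomial R) : R⟦X⟧)
    have hT (n : ℕ) : ‖PowerSeries.coeff n (f - P)‖ ≤ r ^ K := by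
      rcases lt_or_ge n N with hn | hn
      · simp [P, PowerSeries.coeff_trunc, hn, pow_nonneg hr0.le]
      · simpa [P, PowerSeries.coeff_trunc, not_lt.2 hn] using hN n hn
    have hwT (n : ℕ) : ‖PowerSeries.coeff n (w * (f - P))‖ ≤ r ^ (K + 1) := by
      rw [PowerSeries.coeff_mul]
      refine IsUltrametricDist.norm_sum_le_of_forall_le_of_nonneg (by positivity) fun ab _ => ?_
      refine (norm_mul_le _ _).trans ?_
      rw [pow_succ']
      exact mul_le_mul (hu1 _) (hT _) (norm_nonneg _) hr0.le
    have hrest : PowerSeries.IsRestricted 1 (u * f - w * P) :=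
      (PowerSeries.IsRestricted.subring 1).sub_mem huf
        ((PowerSeries.IsRestricted.subring 1).mul_mem
          ((PowerSeries.IsRestricted.subring 1).sub_mem hu (PowerSeries.isRestricted_one 1))
          (isRestricted_one_coe_trunc N f))
    have hsplit : f = (u * f - w * P) - w * (f - P) := by ring
    filter_upwards [(isRestricted_one_iff.1 hrest).eventually_le_const (pow_pos hr0 (K + 1))]
      with n hn
    rw [one_mul, hsplit, map_sub, sub_eq_add_neg]
    exact (IsUltrametricDist.norm_add_le_max _ _).trans (max_le hn (by simpa using hwT n))

lemma isRestricted_coeffY_mul {M N : MvPowerSeries (Fin 2) R} {l : ℕ} (hM0 : coeffY 0 M = 0)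
    (hN0 : coeffY 0 N = 0) (hM : ∀ m < l, PowerSeries.IsRestricted 1 (coeffY m M))
    (hN : ∀ m < l, PowerSeries.IsRestricted 1 (coeffY m N)) {m : ℕ} (hml : m ≤ l) :
    PowerSeries.IsRestricted 1 (coeffY m (M * N)) := by
  rw [coeffY_mul]
  refine (PowerSeries.IsRestricted.subring 1).sum_mem fun ⟨u, v⟩ huv => ?_
  rw [Finset.HasAntidiagonal.mem_antidiagonal] at huv
  obtain rfl | hu := Nat.eq_zero_or_pos u
  · rw [hM0, zero_mul]
    exact PowerSeries.isRestricted_zero 1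
  obtain rfl | hv := Nat.eq_zero_or_pos v
  · rw [hN0, mul_zero]
    exact PowerSeries.isRestricted_zero 1
  exact PowerSeries.isRestricted.mul 1 (hM u (by omega)) (hN v (by omega))

lemma isRestricted_coeffY_pow {M : MvPowerSeries (Fin 2) R} {l k : ℕ} (hM0 : coeffY 0 M = 0)
    (hM : ∀ m < l, PowerSeries.IsRestricted 1 (coeffY m M)) (hk : 2 ≤ k) :
    PowerSeries.IsRestricted 1 (coeffY l (M ^ k)) := by
  suffices ∀ m ≤ l, PowerSeries.IsRestricted 1 (coeffY m (M ^ k)) from this l le_rfl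
  induction k, hk using Nat.le_induction with
  | base => exact fun m hm => pow_two M ▸ isRestricted_coeffY_mul hM0 hM0 hM hM hm
  | succ k hk ih =>
    refine fun m hm => pow_succ M k ▸ isRestricted_coeffY_mul ?_ hM0
      (fun m hm => ih m hm.le) hM hm
    rw [coeffY_zero_pow, hM0, zero_pow (by omega)]

end Restricted

section HondaLog

variable {p : ℕ} [hp : Fact p.Prime] {s : ℕ}

lemma coeff_hondaLog_prime_pow (hs : 0 < s) (j : ℕ) :
    PowerSeries.coeff (p ^ (s * j)) (hondaLog p s) = (p : ℚ_[p]) ^ (-(j : ℤ)) := by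
  have hinj : Function.Injective fun j => p ^ (s * j) :=
    (Nat.pow_right_injective hp.out.two_le).comp (mul_right_injective₀ hs.ne')
  rw [hondaLog, PowerSeries.coeff_mk, dif_pos ⟨j, rfl⟩]
  congr
  exact (hinj (Nat.find_spec (⟨j, rfl⟩ : ∃ i, p ^ (s * j) = p ^ (s * i)))).symm

lemma coeff_hondaLog_eq_zero {n : ℕ} (h : ∀ j, n ≠ p ^ (s * j)) :
    PowerSeries.coeff n (hondaLog p s) = 0 := by
  rw [hondaLog, PowerSeries.coeff_mk, dif_neg (not_exists.2 h)]

lemma coeff_hondaLog_zero : PowerSeries.coeff 0 (hondaLog p s) = 0 :=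
  coeff_hondaLog_eq_zero fun _ => (pow_pos hp.out.pos _).ne

lemma coeff_hondaLog_one (hs : 0 < s) : PowerSeries.coeff 1 (hondaLog p s) = 1 := by
  simpa using coeff_hondaLog_prime_pow (p := p) hs 0

lemma coeff_hasseDeriv_hondaLog_mul (hs : 0 < s) {n k j : ℕ} (hj : n + (k + 1) = p ^ (s * j)) :
    PowerSeries.coeff n (hasseDeriv (k + 1) (hondaLog p s)) * (k + 1 : ℕ) =
      (p : ℚ_[p]) ^ (s * j - j) * ((p ^ (s * j) - 1).choose k : ℕ) := by
  have hchoose : ((p ^ (s * j)).choose (k + 1) : ℚ_[p]) * ((k + 1 : ℕ) : ℚ_[p]) =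
      (p : ℚ_[p]) ^ (s * j) * ((p ^ (s * j) - 1).choose k : ℚ_[p]) := by
    have h := Nat.add_one_mul_choose_eq (p ^ (s * j) - 1) k
    rw [Nat.sub_add_cancel (Nat.one_le_pow _ _ hp.out.pos)] at h
    exact_mod_cast h.symm
  have hpow : (p : ℚ_[p]) ^ (s * j) * (p : ℚ_[p]) ^ (-(j : ℤ)) = (p : ℚ_[p]) ^ (s * j - j) := by
    rw [← zpow_natCast, ← zpow_add₀ (by exact_mod_cast hp.out.ne_zero), ← zpow_natCast,
      Nat.cast_sub (Nat.le_mul_of_pos_left j hs)]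
    ring_nf
  rw [coeff_hasseDeriv, hj, coeff_hondaLog_prime_pow hs, mul_right_comm, hchoose, mul_right_comm,
    hpow]

lemma norm_coeff_hasseDeriv_hondaLog_mul_le (hs : 2 ≤ s) {n k J : ℕ}
    (hJ : ∀ j < J, n + k ≠ p ^ (s * j)) :
    ‖PowerSeries.coeff n (hasseDeriv k (hondaLog p s)) * k‖ ≤ (p : ℝ)⁻¹ ^ J := by
  by_cases h : ∃ j, n + k = p ^ (s * j)
  swap
  · rw [coeff_hasseDeriv, coeff_hondaLog_eq_zero (not_exists.1 h), mul_zero, zero_mul, norm_zero]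
    positivity
  obtain ⟨j, hj⟩ := h
  have hJj : J ≤ j := by
    by_contra! hjJ
    exact hJ j hjJ hj
  rcases k with _ | k
  · simp
  have h2j : 2 * j ≤ s * j := Nat.mul_le_mul_right j hs
  rw [coeff_hasseDeriv_hondaLog_mul (by omega) hj, norm_mul, norm_pow, Padic.norm_p]
  calc (p : ℝ)⁻¹ ^ (s * j - j) * ‖(((p ^ (s * j) - 1).choose k : ℕ) : ℚ_[p])‖
      ≤ (p : ℝ)⁻¹ ^ (s * j - j) * 1 :=
        mul_le_mul_of_nonneg_left (IsUltrametricDist.norm_natCast_le_one ℚ_[p] _) (by positivity)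
    _ ≤ (p : ℝ)⁻¹ ^ J := by
        rw [mul_one]
        exact pow_le_pow_of_le_one (by positivity)
          (inv_le_one_of_one_le₀ (by exact_mod_cast hp.out.one_le)) (by omega)

lemma isRestricted_hasseDeriv_hondaLog (hs : 2 ≤ s) {k : ℕ} (hk : k ≠ 0) :
    PowerSeries.IsRestricted 1 (hasseDeriv k (hondaLog p s)) := by
  have hk' : ‖(k : ℚ_[p])‖ ≠ 0 := by simpa using hk
  refine isRestricted_one_of_eventually_le (C := ‖(k : ℚ_[p])‖⁻¹) (r := (p : ℝ)⁻¹) (by positivity)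
    (inv_lt_one_of_one_lt₀ (by exact_mod_cast hp.out.one_lt)) fun K => ?_
  filter_upwards [eventually_ge_atTop (p ^ (s * K))] with n hn
  have hJ : ∀ j < K, n + k ≠ p ^ (s * j) := fun j hj => by
    have : p ^ (s * j) < p ^ (s * K) :=
      Nat.pow_lt_pow_right hp.out.one_lt (Nat.mul_lt_mul_of_pos_left hj (by omega))
    omega
  have h := norm_coeff_hasseDeriv_hondaLog_mul_le hs hJ
  rw [norm_mul] at h
  rw [inv_mul_eq_div, le_div_iff₀ (by positivity)]
  exact h

lemma norm_coeff_hasseDeriv_one_hondaLog_sub_one_le (hs : 2 ≤ s) (n : ℕ) :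
    ‖PowerSeries.coeff n (hasseDeriv 1 (hondaLog p s) - 1)‖ ≤ (p : ℝ)⁻¹ := by
  rcases n with _ | n
  · rw [map_sub, coeff_hasseDeriv, zero_add, coeff_hondaLog_one (by omega), PowerSeries.coeff_one,
      if_pos rfl]
    simp
  have h := norm_coeff_hasseDeriv_hondaLog_mul_le (p := p) hs (n := n + 1) (k := 1) (J := 1)
    (fun j hj => by
      obtain rfl : j = 0 := by omega
      simp)
  simpa [PowerSeries.coeff_one] using h

end HondaLog

section HondaFormalGroupLaw

variable {p : ℕ} [hp : Fact p.Prime] {s : ℕ} {G : MvPowerSeries (Fin 2) ℚ_[p]}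

lemma coeffY_zero_eq_X (hs : 0 < s) (hG0 : constantCoeff G = 0)
    (hG : substPS G (hondaLog p s) =
      substPS (X 0) (hondaLog p s) + substPS (X 1) (hondaLog p s)) :
    coeffY 0 G = PowerSeries.X := by
  refine eq_of_substPS_eq (coeff_hondaLog_one hs) ?_ PowerSeries.constantCoeff_X ?_
  · rw [← PowerSeries.coeff_zero_eq_constantCoeff_apply, coeff_coeffY]
    simpa using hG0
  · rw [← coeffY_zero_substPS, hG, map_add, coeffY_substPS_X_zero, coeffY_substPS_X_one,
      coeff_hondaLog_zero, substPS_X]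
    simp

lemma isRestricted_coeffY (hs : 2 ≤ s) (hG0 : constantCoeff G = 0)
    (hGbd : ∀ d, ‖MvPowerSeries.coeff d G‖ ≤ 1)
    (hG : substPS G (hondaLog p s) =
      substPS (X 0) (hondaLog p s) + substPS (X 1) (hondaLog p s)) (l : ℕ) :
    PowerSeries.IsRestricted 1 (coeffY l G) := by
  induction l using Nat.strong_induction_on with | _ l ih =>
  have hX := coeffY_zero_eq_X (by omega) hG0 hG
  rcases l with _ | l
  · rw [hX, PowerSeries.X_eq]
    exact PowerSeries.isRestricted_monomial 1 1 1
  set M := G - X 0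
  have hMG (m : ℕ) : coeffY m M = coeffY m G - if m = 0 then PowerSeries.X else 0 := by
    rw [map_sub, ← pow_one (X 0), coeffY_X_zero_pow, pow_one]
  have hM0 : coeffY 0 M = 0 := by rw [hMG, hX, if_pos rfl, sub_self]
  have hM (m : ℕ) (hm : m < l + 1) : PowerSeries.IsRestricted 1 (coeffY m M) := by
    rcases m with _ | m
    · exact hM0 ▸ PowerSeries.isRestricted_zero 1
    · simpa [hMG] using ih (m + 1) hm
  have hkey : hasseDeriv 1 (hondaLog p s) * coeffY (l + 1) G =
      PowerSeries.C (PowerSeries.coeff (l + 1) (hondaLog p s)) -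
        ∑ k ∈ Finset.range l, hasseDeriv (k + 2) (hondaLog p s) * coeffY (l + 1) (M ^ (k + 2)) := by
    have htaylor := coeffY_substPS_X_zero_add hM0 (hondaLog p s) (l + 1)
    rw [add_sub_cancel, hG, map_add, coeffY_substPS_X_zero, if_neg l.succ_ne_zero, zero_add,
      coeffY_substPS_X_one, Finset.sum_range_succ', Finset.sum_range_succ', pow_zero, coeffY_one,
      if_neg l.succ_ne_zero, mul_zero, add_zero, pow_one, hMG, if_neg l.succ_ne_zero, sub_zero,
      zero_add] at htaylor
    rw [htaylor]
    ring
  refine isRestricted_one_of_isRestricted_mul (inv_pos.2 (by exact_mod_cast hp.out.pos))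
    (inv_lt_one_of_one_lt₀ (by exact_mod_cast hp.out.one_lt))
    (isRestricted_hasseDeriv_hondaLog hs one_ne_zero)
    (norm_coeff_hasseDeriv_one_hondaLog_sub_one_le hs) (fun n => by simpa using hGbd _) ?_
  rw [hkey]
  exact (PowerSeries.IsRestricted.subring 1).sub_mem (PowerSeries.isRestricted_C 1 _)
    ((PowerSeries.IsRestricted.subring 1).sum_mem fun k _ =>
      PowerSeries.isRestricted.mul 1 (isRestricted_hasseDeriv_hondaLog hs (by omega))
        (isRestricted_coeffY_pow hM0 hM (by omega)))

end HondaFormalGroupLaw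

end HondaFGL

/-- For `s > 1`, the Honda formal group law `F(x,y)` lies in `𝔽_p[x][[y]]`:
writing `F(x,y) = Σ_l A_l(x) yˡ`, each `A_l` is a polynomial in `x`, i.e. for each `l`
only finitely many coefficients of `xⁱ yˡ` in `F` are nonzero. -/
theorem honda_polynomial_in_x (p : ℕ) [Fact p.Prime] (s : ℕ) (hs : 1 < s)
    (F : MvPowerSeries (Fin 2) (ZMod p)) (hF : IsHondaFGL p s F) :
    ∀ l : ℕ,
      {i : ℕ |
        MvPowerSeries.coeff (Finsupp.single (0 : Fin 2) i + Finsupp.single 1 l) F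
          ≠ 0}.Finite := by
  intro l
  obtain ⟨F₀, hF₀0, hF₀, rfl⟩ := hF
  set G := MvPowerSeries.map (PadicInt.Coe.ringHom (p := p)) F₀
  have hnorm (d : Fin 2 →₀ ℕ) : ‖MvPowerSeries.coeff d G‖ = ‖MvPowerSeries.coeff d F₀‖ := by
    rw [MvPowerSeries.coeff_map]
    exact PadicInt.padic_norm_e_of_padicInt _
  have hres := HondaFGL.isRestricted_coeffY hs (by simp [G, hF₀0])
    (fun d => (hnorm d).trans_le (PadicInt.norm_le_one _)) hF₀ l
  have hsmall := (HondaFGL.isRestricted_one_iff.1 hres).eventually_lt_const one_pos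
  rw [← Nat.cofinite_eq_atTop] at hsmall
  refine (Filter.eventually_cofinite.1 hsmall).subset fun i hi hlt => hi ?_
  rw [HondaFGL.coeff_coeffY, hnorm] at hlt
  rw [MvPowerSeries.coeff_map, ← RingHom.mem_ker, PadicInt.ker_toZMod,
    IsLocalRing.mem_maximalIdeal, PadicInt.mem_nonunits]
  exact hlt
end

section
/- Let p be a prime and s > 1 an integer, and set q = p^{s-1}. Let F ∈ F_p[[x,y]] be the Honda formal group law of height s. Then F(x,y) ≡ x + y modulo the ideal (y^q) of F_p[[x,y]]; that is, every coefficient α_{ij} of x^i y^j in F with j < q vanishes except α_{1,0} = α_{0,1} = 1. -/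
/-!
Let `F₀` over `ℤ_p` be the lift of `F` and `w = x + y`. Comparing coefficients of a monomial
`xᵃ yᵇ` with `b < q` in `l(F₀) = l(x) + l(y)` expresses the coefficient of `F₀ - w` as
`-Σ_{i ≥ 1} p⁻ⁱ` times that of `F₀^N - x^N - y^N`, `N = p^{si}`. By induction over monomials,
`F₀ ≡ w (mod p)` below `xᵃ yᵇ`, so there `F₀^N` may be replaced by `G^N` for some `G ≡ w (mod p)`,
and `G^N ≡ w^N (mod p^{si+1})`. The remaining coefficient of `w^N - x^N - y^N` is `C(N, b)` with
`0 < b < p^{s-1}`, divisible by `p^{si-s+2}`. Both are divisible by `p^{i+1}`, so each term of the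
sum lies in `pℤ_p`.
-/

open MvPowerSeries Finsupp
open scoped Classical

theorem Nat.Prime.pow_sub_factorization_dvd_choose {p n k : ℕ} (hp : p.Prime) (hk0 : k ≠ 0)
    (hkn : k ≤ p ^ n) : p ^ (n - k.factorization p) ∣ (p ^ n).choose k := by
  rw [← Nat.factorization_choose_prime_pow hp hkn hk0]
  exact Nat.ordProj_dvd _ _

theorem Nat.Prime.pow_dvd_choose_of_lt_pow {p n t k : ℕ} (hp : p.Prime) (hk0 : k ≠ 0)
    (hkt : k < p ^ t) (htn : t ≤ n) : p ^ (n + 1 - t) ∣ (p ^ n).choose k := by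
  have hv : p ^ k.factorization p < p ^ t := (Nat.ordProj_le p hk0).trans_lt hkt
  have hvt := (Nat.pow_lt_pow_iff_right hp.one_lt).1 hv
  exact (Nat.pow_dvd_pow p (by omega)).trans
    (hp.pow_sub_factorization_dvd_choose hk0 (hkt.le.trans (Nat.pow_le_pow_right hp.pos htn)))

namespace MvPowerSeries

variable {R : Type*} [CommRing R]

section

variable {σ : Type*}

theorem dvd_coeff_of_C_dvd {r : R} {φ : MvPowerSeries σ R} (h : C r ∣ φ) (d : σ →₀ ℕ) :
    r ∣ coeff d φ := by
  obtain ⟨ψ, rfl⟩ := h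
  rw [coeff_C_mul]
  exact dvd_mul_right _ _

theorem coeff_mul_eq_zero_of_coeff_lt {f g : MvPowerSeries σ R} {d : σ →₀ ℕ}
    (hf : ∀ e < d, coeff e f = 0) (hg : constantCoeff g = 0) : coeff d (f * g) = 0 := by
  rw [coeff_mul]
  refine Finset.sum_eq_zero fun ⟨e₁, e₂⟩ he => ?_
  rw [Finset.HasAntidiagonal.mem_antidiagonal] at he
  obtain rfl | he₂ := eq_or_ne e₂ 0
  · rw [coeff_zero_eq_constantCoeff_apply, hg, mul_zero]
  · rw [hf e₁ (he ▸ lt_add_of_pos_right e₁ (pos_iff_ne_zero.2 he₂)), zero_mul]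

theorem coeff_pow_eq_of_coeff_lt_eq {f g : MvPowerSeries σ R} {d : σ →₀ ℕ}
    (hf : constantCoeff f = 0) (hg : constantCoeff g = 0) (hfg : ∀ e < d, coeff e f = coeff e g)
    {n : ℕ} (hn : 2 ≤ n) : coeff d (f ^ n) = coeff d (g ^ n) := by
  rw [← sub_eq_zero, ← map_sub, ← geom_sum₂_mul, mul_comm]
  refine coeff_mul_eq_zero_of_coeff_lt (fun e he => by rw [map_sub, hfg e he, sub_self]) ?_
  rw [map_sum]
  refine Finset.sum_eq_zero fun j hj => ?_
  rw [map_mul, map_pow, map_pow, hf, hg, ← pow_add, zero_pow]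
  have := Finset.mem_range.1 hj
  omega

theorem pow_dvd_coeff_pow_prime_pow_sub {p : ℕ} (hp : 1 < p) {f g : MvPowerSeries σ R}
    {d : σ →₀ ℕ} (hf : constantCoeff f = 0) (hg : constantCoeff g = 0)
    (hfg : ∀ e < d, (p : R) ∣ coeff e (f - g)) {n : ℕ} (hn : n ≠ 0) :
    (p : R) ^ (n + 1) ∣ coeff d (f ^ p ^ n - g ^ p ^ n) := by
  -- `h` agrees with `f` below `d` and is congruent to `g` modulo `p` everywhere.
  set h := g + (trunc R d (f - g) : MvPowerSeries σ R)
  have hh : constantCoeff h = 0 := by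
    rw [map_add, hg, zero_add, ← coeff_zero_eq_constantCoeff_apply, MvPolynomial.coeff_coe,
      coeff_trunc]
    split_ifs <;> simp [hf, hg]
  have hfh : ∀ e < d, coeff e f = coeff e h := fun e he => by
    rw [map_add, MvPolynomial.coeff_coe, coeff_trunc, if_pos he, map_sub, add_sub_cancel]
  have hhg : (p : MvPowerSeries σ R) ∣ h - g := by
    rw [add_sub_cancel_left, ← map_natCast MvPolynomial.coeToMvPowerSeries.ringHom]
    refine map_dvd _ ((MvPolynomial.C_dvd_iff_dvd_coeff _ _).2 fun e => ?_)
    rw [coeff_trunc]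
    split_ifs with he
    exacts [hfg e he, dvd_zero _]
  rw [map_sub, coeff_pow_eq_of_coeff_lt_eq hf hh hfh (hp.trans_le (Nat.le_self_pow hn p)),
    ← map_sub]
  exact dvd_coeff_of_C_dvd (by rw [map_pow, map_natCast]; exact dvd_sub_pow_of_dvd_sub hhg n) d

end

theorem coeff_X_add_X_pow (d : Fin 2 →₀ ℕ) (n : ℕ) :
    coeff d ((X 0 + X 1 : MvPowerSeries (Fin 2) R) ^ n) =
      if d 0 + d 1 = n then (n.choose (d 1) : R) else 0 := by
  have hd : ∀ k, d = single 0 k + single 1 (n - k) ↔ k = d 0 ∧ d 1 = n - k := fun k => by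
    rw [Finsupp.ext_iff, Fin.forall_fin_two]
    simp [eq_comm]
  simp_rw [add_pow, map_sum, ← map_natCast (C (σ := Fin 2)), coeff_mul_C, X_pow_eq,
    monomial_mul_monomial, one_mul, coeff_monomial, hd, ite_and, ite_mul, one_mul, zero_mul,
    Finset.sum_ite_eq', Finset.mem_range]
  by_cases hn : d 0 + d 1 = n
  · rw [if_pos (by omega), if_pos (by omega), if_pos hn, ← hn, Nat.choose_symm_add]
  · rw [if_neg hn]
    split_ifs <;> first | rfl | omega

theorem pow_dvd_coeff_X_add_X_pow_sub {p : ℕ} (hp : p.Prime) {t n : ℕ} (htn : t ≤ n)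
    {d : Fin 2 →₀ ℕ} (hd : d 1 < p ^ t) :
    (p : R) ^ (n + 1 - t) ∣
      coeff d ((X 0 + X 1 : MvPowerSeries (Fin 2) R) ^ p ^ n - X 0 ^ p ^ n - X 1 ^ p ^ n) := by
  have hdn : d 1 < p ^ n := hd.trans_le (Nat.pow_le_pow_right hp.pos htn)
  rw [map_sub, map_sub, coeff_X_add_X_pow, coeff_X_pow, coeff_X_pow,
    if_neg (show d ≠ single 1 (p ^ n) by rintro rfl; simp at hdn), sub_zero]
  rcases eq_or_ne (d 1) 0 with h1 | h1
  · have : d = single 0 (p ^ n) ↔ d 0 + d 1 = p ^ n := by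
      rw [Finsupp.ext_iff, Fin.forall_fin_two]
      simp [h1]
    simp [this, h1]
  · rw [if_neg (show d ≠ single 0 (p ^ n) by rintro rfl; simp at h1), sub_zero]
    split_ifs
    · exact_mod_cast Nat.cast_dvd_cast (hp.pow_dvd_choose_of_lt_pow h1 hd htn)
    · exact dvd_zero _

theorem pow_dvd_coeff_pow_sub_X_pow_sub_X_pow {p : ℕ} (hp : p.Prime)
    {F : MvPowerSeries (Fin 2) R} (hF : constantCoeff F = 0) {d : Fin 2 →₀ ℕ}
    (hFd : ∀ e < d, (p : R) ∣ coeff e (F - (X 0 + X 1))) {t n : ℕ} (htn : t ≤ n) (hn : n ≠ 0)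
    (hd : d 1 < p ^ t) :
    (p : R) ^ (n + 1 - t) ∣ coeff d (F ^ p ^ n - X 0 ^ p ^ n - X 1 ^ p ^ n) := by
  have hw : constantCoeff (X 0 + X 1 : MvPowerSeries (Fin 2) R) = 0 := by simp
  have hFw := (pow_dvd_pow (p : R) (Nat.sub_le (n + 1) t)).trans
    (pow_dvd_coeff_pow_prime_pow_sub hp.one_lt hF hw hFd hn)
  rw [show F ^ p ^ n - X 0 ^ p ^ n - X 1 ^ p ^ n =
    (F ^ p ^ n - (X 0 + X 1) ^ p ^ n) + ((X 0 + X 1) ^ p ^ n - X 0 ^ p ^ n - X 1 ^ p ^ n) by ring,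
    map_add]
  exact dvd_add hFw (pow_dvd_coeff_X_add_X_pow_sub hp htn hd)

end MvPowerSeries

section Honda

variable {p : ℕ} [hp : Fact p.Prime] {s : ℕ}

theorem hondaLog_coeff_one : PowerSeries.coeff 1 (hondaLog p s) = 1 := by
  have h : ∃ i, 1 = p ^ (s * i) := ⟨0, by simp⟩
  rw [hondaLog, PowerSeries.coeff_mk, dif_pos h, (Nat.find_eq_zero h).2 (by simp)]
  simp

theorem hondaLog_coeff_eq_zero_or (m : ℕ) :
    PowerSeries.coeff m (hondaLog p s) = 0 ∨
      ∃ i, m = p ^ (s * i) ∧ PowerSeries.coeff m (hondaLog p s) = (p : ℚ_[p]) ^ (-(i : ℤ)) := by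
  rw [hondaLog, PowerSeries.coeff_mk]
  split_ifs with h
  exacts [Or.inr ⟨_, Nat.find_spec h, rfl⟩, Or.inl rfl]

theorem sum_hondaLog_coeff_mul_coeff_eq_zero {F₀ : MvPowerSeries (Fin 2) ℤ_[p]}
    (hF₀ : substPS (map (PadicInt.Coe.ringHom (p := p)) F₀) (hondaLog p s) =
      substPS (X 0) (hondaLog p s) + substPS (X 1) (hondaLog p s)) (d : Fin 2 →₀ ℕ) :
    ∑ m ∈ Finset.range (d.degree + 1), PowerSeries.coeff m (hondaLog p s) *
      ((coeff d (F₀ ^ m - X 0 ^ m - X 1 ^ m) : ℤ_[p]) : ℚ_[p]) = 0 := by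
  have hcoe : ∀ m, ((coeff d (F₀ ^ m - X 0 ^ m - X 1 ^ m) : ℤ_[p]) : ℚ_[p]) =
      coeff d (map PadicInt.Coe.ringHom F₀ ^ m) - coeff d (X 0 ^ m) - coeff d (X 1 ^ m) :=
    fun m => by simp only [← map_X PadicInt.Coe.ringHom, ← map_pow, ← map_sub, coeff_map]; rfl
  simp only [hcoe, mul_sub, Finset.sum_sub_distrib]
  rw [sub_sub, sub_eq_zero]
  exact congrArg (coeff d) hF₀

theorem norm_hondaLog_coeff_mul_coeff_le {F₀ : MvPowerSeries (Fin 2) ℤ_[p]}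
    (hF₀ : constantCoeff F₀ = 0) {d : Fin 2 →₀ ℕ} (hd : d 1 < p ^ (s - 1))
    (hFd : ∀ e < d, (p : ℤ_[p]) ∣ coeff e (F₀ - (X 0 + X 1))) {m : ℕ} (hm : m ≠ 1) :
    ‖PowerSeries.coeff m (hondaLog p s) *
      ((coeff d (F₀ ^ m - X 0 ^ m - X 1 ^ m) : ℤ_[p]) : ℚ_[p])‖ ≤ (p : ℝ) ^ (-1 : ℤ) := by
  obtain h | ⟨i, rfl, h⟩ := hondaLog_coeff_eq_zero_or (p := p) (s := s) m
  · rw [h, zero_mul, norm_zero]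
    positivity
  have hsi : s * i ≠ 0 := by
    rintro h0
    simp [h0] at hm
  have hs := Nat.pos_of_ne_zero (left_ne_zero_of_mul hsi)
  have hi := Nat.pos_of_ne_zero (right_ne_zero_of_mul hsi)
  have hexp : i + 1 ≤ s * i + 1 - (s - 1) := by
    have : s + i ≤ s * i + 1 := by nlinarith
    omega
  have hdvd := (pow_dvd_pow (p : ℤ_[p]) hexp).trans (pow_dvd_coeff_pow_sub_X_pow_sub_X_pow hp.out
    hF₀ hFd ((Nat.sub_le s 1).trans (Nat.le_mul_of_pos_right s hi)) hsi hd)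
  have hnorm := (PadicInt.norm_le_pow_iff_mem_span_pow _ _).2 (Ideal.mem_span_singleton.2 hdvd)
  rw [h, norm_mul, Padic.norm_p_zpow, ← PadicInt.norm_def]
  calc _ ≤ (p : ℝ) ^ (-(-(i : ℤ))) * (p : ℝ) ^ (-((i + 1 : ℕ) : ℤ)) := by gcongr
    _ = _ := by
      rw [← zpow_add₀ (by exact_mod_cast hp.out.ne_zero)]
      push_cast
      ring_nf

theorem dvd_coeff_sub_X_add_X_of_hondaLog {F₀ : MvPowerSeries (Fin 2) ℤ_[p]}
    (hF₀ : constantCoeff F₀ = 0)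
    (hl : substPS (map (PadicInt.Coe.ringHom (p := p)) F₀) (hondaLog p s) =
      substPS (X 0) (hondaLog p s) + substPS (X 1) (hondaLog p s))
    (d : Fin 2 →₀ ℕ) (hd : d 1 < p ^ (s - 1)) :
    (p : ℤ_[p]) ∣ coeff d (F₀ - (X 0 + X 1)) := by
  induction d using WellFoundedLT.induction with
  | ind d ih =>
  obtain rfl | hd0 := eq_or_ne d 0
  · simp [hF₀]
  have hFd : ∀ e < d, (p : ℤ_[p]) ∣ coeff e (F₀ - (X 0 + X 1)) :=
    fun e he => ih e he ((he.le 1).trans_lt hd)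
  have h1 : 1 ∈ Finset.range (d.degree + 1) := by
    have := (degree_eq_zero_iff d).not.2 hd0
    rw [Finset.mem_range]
    omega
  have hsum := sum_hondaLog_coeff_mul_coeff_eq_zero hl d
  rw [← Finset.add_sum_erase _ _ h1, hondaLog_coeff_one, one_mul, pow_one, pow_one, pow_one,
    sub_sub, add_eq_zero_iff_eq_neg] at hsum
  rw [← PadicInt.norm_lt_one_iff_dvd, PadicInt.norm_def, hsum, norm_neg]
  refine (IsUltrametricDist.norm_sum_le_of_forall_le_of_nonneg (by positivity) fun m hm =>
    norm_hondaLog_coeff_mul_coeff_le hF₀ hd hFd (Finset.ne_of_mem_erase hm)).trans_lt ?_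
  exact zpow_lt_one_of_neg₀ (by exact_mod_cast hp.out.one_lt) (by norm_num)

end Honda

theorem honda_congr_add_mod_y_q_general (p : ℕ) [Fact p.Prime] (s : ℕ)
    (F : MvPowerSeries (Fin 2) (ZMod p)) (hF : IsHondaFGL p s F) :
    ∀ i j : ℕ, j < p ^ (s - 1) →
      MvPowerSeries.coeff (Finsupp.single (0 : Fin 2) i + Finsupp.single 1 j) F =
        MvPolynomial.coeff (Finsupp.single (0 : Fin 2) i + Finsupp.single 1 j)
          (MvPolynomial.X 0 + MvPolynomial.X 1 : MvPolynomial (Fin 2) (ZMod p)) := by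
  intro i j hj
  obtain ⟨F₀, hF₀, hl, rfl⟩ := hF
  obtain ⟨b, hb⟩ := dvd_coeff_sub_X_add_X_of_hondaLog hF₀ hl (single 0 i + single 1 j) (by simpa)
  rw [← MvPolynomial.coeff_coe, MvPolynomial.coe_add, MvPolynomial.coe_X, MvPolynomial.coe_X,
    ← map_X PadicInt.toZMod, ← map_X PadicInt.toZMod, ← map_add, coeff_map, coeff_map,
    ← sub_eq_zero, ← map_sub, ← map_sub, hb, map_mul, map_natCast, ZMod.natCast_self, zero_mul]

/-- For `s > 1` and `q = p^(s-1)`, `F(x,y) ≡ x + y mod (y^q)`: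
every coefficient of `xⁱ yʲ` in `F` with `j < q` agrees with the corresponding
coefficient of the polynomial `x + y`. -/
theorem honda_congr_add_mod_y_q (p : ℕ) [Fact p.Prime] (s : ℕ) (hs : 1 < s)
    (F : MvPowerSeries (Fin 2) (ZMod p)) (hF : IsHondaFGL p s F) :
    ∀ i j : ℕ, j < p ^ (s - 1) →
      MvPowerSeries.coeff (Finsupp.single (0 : Fin 2) i + Finsupp.single 1 j) F =
        MvPolynomial.coeff (Finsupp.single (0 : Fin 2) i + Finsupp.single 1 j)
          (MvPolynomial.X 0 + MvPolynomial.X 1 : MvPolynomial (Fin 2) (ZMod p)) :=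
  honda_congr_add_mod_y_q_general p s F hF
end

section
/- Let p be a prime and s > 1 an integer, and set q = p^{s-1}. Let F ∈ F_p[[x,y]] be the Honda formal group law of height s, and let w̄_1(x,y) ∈ F_p[x,y] be the mod p reduction of the first Witt addition polynomial w_1(x,y) = -Σ_{0<j<p} (1/p) C(p,j) x^j y^{p-j} ∈ Z[x,y], where C(p,j) denotes the binomial coefficient. Then F(x,y) ≡ x + y + w̄_1(x,y)^q modulo the ideal (y^{q^2}) of F_p[[x,y]]. -/
open MvPowerSeries Finsupp
open scoped Classical

/-- The first Witt addition polynomial `w₁(x,y) = -Σ_{0<j<p} (1/p) C(p,j) xʲ y^{p-j}`. -/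
noncomputable def wittW1 (p : ℕ) : MvPolynomial (Fin 2) ℤ :=
  -∑ j ∈ Finset.Ioo 0 p,
    MvPolynomial.C ((p.choose j : ℤ) / (p : ℤ)) *
      MvPolynomial.X 0 ^ j * MvPolynomial.X 1 ^ (p - j)

/-!
Let `G = x + y + w₁(x, y)^q` over `ℤ_p`. By induction on `d` we show that `p` divides the
coefficient of `xᵈ` in `F₀ - G` whenever `d_y < q²`. With `k = p^(s i)` and `cᵢ` the coefficient
of `xᵈ` in `xᵏ + yᵏ - F₀ᵏ`, the functional equation `l(F₀) = l(x) + l(y)` gives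
`Σᵢ p^(-i) cᵢ = 0`. For `i ≥ 1`, modulo `p^(i+1)` and `y^(q²)`:
* `F₀ᵏ ≡ Gᵏ` by the induction hypothesis (the coefficient of `xᵈ` itself does not matter);
* `Gᵏ ≡ (x + y)ᵏ`, since `y ∣ w₁` and `p^(n+1-j)` divides `C(pⁿ, t)` for `0 < t < pʲ`;
* `xᵏ + yᵏ ≡ (x + y)ᵏ` for `i ≥ 2`, for the same reason. For `i = 1`, evaluating
  `xᵖ + yᵖ = (x + y)ᵖ + p w₁` at `(x^q, y^q)`, where `w₁(x^q, y^q) ≡ w₁^q` and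
  `x^q + y^q ≡ (x + y)^q` mod `p`, gives `xᵏ + yᵏ ≡ (x + y)ᵏ + p w₁^q` mod `p²`.
Hence, modulo `p`, `p^(-i) cᵢ ≡ 0` for `i ≥ 2` and `c₀ + p⁻¹ c₁ ≡ [xᵈ](x + y + w₁^q - F₀)`.
-/

namespace MvPowerSeries

variable {σ R : Type*} [CommRing R]

theorem coeff_pow_eq_zero_of_degree_lt {S : Type*} [Semiring S] {f : MvPowerSeries σ S}
    (hf : constantCoeff f = 0) {d : σ →₀ ℕ} {n : ℕ} (h : degree d < n) : coeff d (f ^ n) = 0 :=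
  coeff_of_lt_order <| (Nat.cast_lt.2 h).trans_le (le_order_pow_of_constantCoeff_eq_zero n hf)

theorem coeff_add_monomial_pow {f : MvPowerSeries σ R} (hf : constantCoeff f = 0)
    {d : σ →₀ ℕ} (hd : d ≠ 0) (c : R) {m : ℕ} (hm : 2 ≤ m) :
    coeff d ((f + monomial d c) ^ m) = coeff d (f ^ m) := by
  rw [← sub_eq_zero, ← map_sub, ← geom_sum₂_mul, add_sub_cancel_left, mul_comm,
    coeff_monomial_mul, if_pos le_rfl, tsub_self, coeff_zero_eq_constantCoeff, map_sum]
  have hc : constantCoeff (f + monomial d c) = 0 := by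
    rw [map_add, hf, ← coeff_zero_eq_constantCoeff_apply, coeff_monomial, if_neg hd.symm,
      add_zero]
  refine mul_eq_zero_of_right _ (Finset.sum_eq_zero fun i hi => ?_)
  rw [map_mul, map_pow, map_pow, hc, hf, ← pow_add, zero_pow]
  simp only [Finset.mem_range] at hi
  omega

theorem pow_dvd_coeff_pow_sub_pow {p : ℕ} {a b : MvPowerSeries σ R} {d : σ →₀ ℕ}
    (h : ∀ e ≤ d, (p : R) ∣ coeff e (a - b)) (k : ℕ) :
    (p : R) ^ (k + 1) ∣ coeff d (a ^ p ^ k - b ^ p ^ k) := by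
  classical
  have htrunc : (p : MvPolynomial σ R) ∣ trunc' R d a - trunc' R d b := by
    rw [← map_natCast MvPolynomial.C, MvPolynomial.C_dvd_iff_dvd_coeff]
    intro e
    by_cases he : e ≤ d
    · simpa [coeff_trunc', he] using h e he
    · simp [coeff_trunc', he]
  have hpow (f : MvPowerSeries σ R) : coeff d (f ^ p ^ k) = (trunc' R d f ^ p ^ k).coeff d := by
    rcases (p ^ k).eq_zero_or_pos with h0 | hpos
    · simp [h0, coeff_one, MvPolynomial.coeff_one, eq_comm]
    · rw [← MvPolynomial.coeff_coe, MvPolynomial.coe_pow]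
      simpa [coeff_trunc'] using
        congrArg (MvPolynomial.coeff d) (trunc'_trunc'_pow (n := d) hpos f).symm
  obtain ⟨c, hc⟩ := dvd_sub_pow_of_dvd_sub htrunc k
  rw [map_sub, hpow, hpow, ← MvPolynomial.coeff_sub, hc, ← map_natCast MvPolynomial.C, ← map_pow,
    MvPolynomial.coeff_C_mul]
  exact dvd_mul_right _ _

theorem pow_dvd_coeff_pow_sub_pow_of_lt {p : ℕ} (hp : 1 < p) {a b : MvPowerSeries σ R}
    (ha : constantCoeff a = 0) (hb : constantCoeff b = 0) {d : σ →₀ ℕ}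
    (h : ∀ e < d, (p : R) ∣ coeff e (a - b)) {k : ℕ} (hk : k ≠ 0) :
    (p : R) ^ (k + 1) ∣ coeff d (a ^ p ^ k - b ^ p ^ k) := by
  -- Nothing is known about `coeff d (a - b)`, so that coefficient is moved into a monomial `c xᵈ`,
  -- which does not change the coefficient of `xᵈ` in a `pᵏ`-th power.
  by_cases hd : d = 0
  · simp [hd, ha, hb, hk, (Nat.pos_of_ne_zero (by omega : p ≠ 0)).ne']
  set c := coeff d (a - b)
  have hm : 2 ≤ p ^ k := hp.trans_le (Nat.le_self_pow hk p)
  have ha' : constantCoeff (a - monomial d c) = 0 := by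
    rw [map_sub, ha, ← coeff_zero_eq_constantCoeff_apply, coeff_monomial, if_neg (Ne.symm hd),
      sub_zero]
  rw [← sub_add_cancel a (monomial d c), map_sub, coeff_add_monomial_pow ha' hd c hm, ← map_sub]
  refine pow_dvd_coeff_pow_sub_pow (fun e he => ?_) k
  rcases he.lt_or_eq with he | rfl
  · simpa [coeff_monomial, he.ne, sub_right_comm] using h e he
  · simp [c, sub_right_comm]

theorem dvd_coeff_of_mem_span_C_X_pow {S : Type*} [CommSemiring S] {r : S} {i : σ} {Q : ℕ}
    {f : MvPowerSeries σ S} (hf : f ∈ Ideal.span {C r, X i ^ Q}) {d : σ →₀ ℕ} (hd : d i < Q) :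
    r ∣ coeff d f := by
  obtain ⟨u, v, rfl⟩ := Ideal.mem_span_pair.1 hf
  rw [map_add, X_pow_eq, coeff_mul_monomial, if_neg (by rwa [single_le_iff, not_le]), add_zero,
    mul_comm, coeff_C_mul]
  exact dvd_mul_right _ _

end MvPowerSeries

theorem Nat.Prime.pow_dvd_choose_prime_pow {p : ℕ} (hp : p.Prime) {n j t : ℕ} (ht : t ≠ 0)
    (htj : t < p ^ j) : p ^ (n + 1 - j) ∣ (p ^ n).choose t := by
  rcases le_or_gt t (p ^ n) with htn | htn
  · apply pow_dvd_of_le_emultiplicity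
    rw [hp.emultiplicity_choose_prime_pow htn ht, Nat.cast_le]
    have hv : multiplicity p t < j := (Nat.pow_lt_pow_iff_right hp.one_lt).1 <|
      (Nat.le_of_dvd (Nat.pos_of_ne_zero ht) (pow_multiplicity_dvd p t)).trans_lt htj
    omega
  · rw [Nat.choose_eq_zero_of_lt htn]
    exact dvd_zero _

theorem add_pow_prime_pow_sub_pow_mem_span {R : Type*} [CommRing R] {p : ℕ} (hp : p.Prime)
    (x y : R) (n j : ℕ) :
    (x + y) ^ p ^ n - x ^ p ^ n ∈ Ideal.span {(p : R) ^ (n + 1 - j), y ^ p ^ j} := by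
  rw [add_comm x y, add_pow, Finset.sum_range_succ']
  simp only [pow_zero, one_mul, tsub_zero, Nat.choose_zero_right, Nat.cast_one, mul_one,
    add_sub_cancel_right]
  refine Ideal.sum_mem _ fun t _ => ?_
  by_cases ht : p ^ j ≤ t + 1
  · rw [← Nat.sub_add_cancel ht, pow_add, mul_comm (y ^ _), mul_assoc, mul_assoc]
    exact Ideal.mul_mem_right _ _ (Ideal.subset_span (by simp))
  · obtain ⟨c, hc⟩ := hp.pow_dvd_choose_prime_pow (n := n) t.succ_ne_zero (not_le.1 ht)
    rw [hc, Nat.cast_mul, Nat.cast_pow, mul_comm, mul_assoc]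
    exact Ideal.mul_mem_right _ _ (Ideal.subset_span (by simp))

theorem Ideal.span_pair_le_span_pair {R : Type*} [CommSemiring R] {a b a' b' : R} (ha : a' ∣ a)
    (hb : b' ∣ b) : Ideal.span {a, b} ≤ Ideal.span {a', b'} := by
  rw [Ideal.span_le, Set.insert_subset_iff, Set.singleton_subset_iff]
  exact ⟨Ideal.mem_of_dvd _ ha (Ideal.subset_span (by simp)),
    Ideal.mem_of_dvd _ hb (Ideal.subset_span (by simp))⟩

theorem MvPolynomial.natCast_dvd_expand_pow_sub_pow {σ : Type*} (p : ℕ) [Fact p.Prime]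
    (φ : MvPolynomial σ ℤ) (k : ℕ) : (p : MvPolynomial σ ℤ) ∣ expand (p ^ k) φ - φ ^ p ^ k := by
  rw [← map_natCast (C : ℤ →+* MvPolynomial σ ℤ), C_dvd_iff_zmod, map_sub, map_pow, map_expand,
    ← map_iterateFrobenius_expand p,
    RingHom.ext_zmod (iterateFrobenius (ZMod p) p k) (RingHom.id _), map_id, sub_self]

@[simp]
theorem MvPolynomial.coeToMvPowerSeries_algHom_X {σ R A : Type*} [CommSemiring R]
    [CommSemiring A] [Algebra R A] (i : σ) :
    coeToMvPowerSeries.algHom A (X i : MvPolynomial σ R) = MvPowerSeries.X i := by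
  simp [coeToMvPowerSeries.algHom_apply]

section Witt

variable (p : ℕ)

theorem X_one_dvd_wittW1 : (MvPolynomial.X 1 : MvPolynomial (Fin 2) ℤ) ∣ wittW1 p := by
  refine (Finset.dvd_sum fun j hj => ?_).neg_right
  rw [← Nat.sub_add_cancel (Nat.sub_pos_of_lt (Finset.mem_Ioo.1 hj).2), pow_succ]
  exact (dvd_mul_left _ _).mul_left _

variable [Fact p.Prime]

theorem wittW1_spec :
    (MvPolynomial.X 0 ^ p + MvPolynomial.X 1 ^ p : MvPolynomial (Fin 2) ℤ) =
      (MvPolynomial.X 0 + MvPolynomial.X 1) ^ p + (p : MvPolynomial (Fin 2) ℤ) * wittW1 p := by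
  have hp := (Fact.out : p.Prime)
  have hterm : ∀ j ∈ Finset.Ioo 0 p, (p : MvPolynomial (Fin 2) ℤ) *
      (MvPolynomial.C ((p.choose j : ℤ) / p) * MvPolynomial.X 0 ^ j * MvPolynomial.X 1 ^ (p - j)) =
      MvPolynomial.X 0 ^ j * MvPolynomial.X 1 ^ (p - j) *
        (p.choose j : MvPolynomial (Fin 2) ℤ) := by
    intro j hj
    obtain ⟨hj0, hjp⟩ := Finset.mem_Ioo.1 hj
    have hdvd : (p : ℤ) ∣ p.choose j :=
      Int.natCast_dvd_natCast.2 (hp.dvd_choose_self hj0.ne' hjp)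
    rw [← MvPolynomial.C_eq_coe_nat, ← MvPolynomial.C_eq_coe_nat, ← mul_assoc, ← mul_assoc,
      ← map_mul, Int.mul_ediv_cancel' hdvd]
    ring
  have hsplit : Finset.range (p + 1) = insert 0 (insert p (Finset.Ioo 0 p)) := by
    ext j
    simp only [Finset.mem_range, Finset.mem_insert, Finset.mem_Ioo]
    omega
  rw [wittW1, mul_neg, Finset.mul_sum, Finset.sum_congr rfl hterm, add_pow, hsplit,
    Finset.sum_insert (by simp [hp.pos.ne]), Finset.sum_insert (by simp)]
  simp only [pow_zero, tsub_zero, one_mul, Nat.choose_zero_right, Nat.cast_one, mul_one, tsub_self,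
    Nat.choose_self]
  ring

theorem sq_dvd_X_pow_add_X_pow_sub_add_pow_sub_wittW1_pow (k : ℕ) :
    (p : MvPolynomial (Fin 2) ℤ) ^ 2 ∣
      MvPolynomial.X 0 ^ p ^ (k + 1) + MvPolynomial.X 1 ^ p ^ (k + 1) -
        (MvPolynomial.X 0 + MvPolynomial.X 1) ^ p ^ (k + 1) -
          (p : MvPolynomial (Fin 2) ℤ) * wittW1 p ^ p ^ k := by
  have hexp := congrArg (MvPolynomial.expand (p ^ k)) (wittW1_spec p)
  simp only [map_add, map_mul, map_pow, map_natCast, MvPolynomial.expand_X] at hexp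
  have hsum := dvd_sub_pow_of_dvd_sub
    (MvPolynomial.natCast_dvd_expand_pow_sub_pow p
      (MvPolynomial.X 0 + MvPolynomial.X 1 : MvPolynomial (Fin 2) ℤ) k) 1
  simp only [map_add, MvPolynomial.expand_X, pow_one, Nat.reduceAdd, sq] at hsum
  have hw := mul_dvd_mul_left (p : MvPolynomial (Fin 2) ℤ)
    (MvPolynomial.natCast_dvd_expand_pow_sub_pow p (wittW1 p) k)
  have hpow (a : MvPolynomial (Fin 2) ℤ) : a ^ p ^ (k + 1) = (a ^ p ^ k) ^ p := by
    rw [pow_succ, pow_mul]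
  rw [hpow, hpow, hpow, hexp, sq]
  convert dvd_add hsum hw using 1
  ring

end Witt

section HondaLog

variable {p : ℕ} [Fact p.Prime] {s : ℕ}

theorem coeff_hondaLog_prime_pow (hs : s ≠ 0) (i : ℕ) :
    PowerSeries.coeff (p ^ (s * i)) (hondaLog p s) = (p : ℚ_[p]) ^ (-(i : ℤ)) := by
  have hex : ∃ i', p ^ (s * i) = p ^ (s * i') := ⟨i, rfl⟩
  have hfind : Nat.find hex = i := by
    have h := Nat.pow_right_injective (Fact.out : p.Prime).two_le (Nat.find_spec hex)
    exact (Nat.eq_of_mul_eq_mul_left (Nat.pos_of_ne_zero hs) h).symm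
  rw [hondaLog, PowerSeries.coeff_mk, dif_pos hex, hfind]

theorem coeff_hondaLog_eq_zero {n : ℕ} (h : ¬∃ i, n = p ^ (s * i)) :
    PowerSeries.coeff n (hondaLog p s) = 0 := by
  rw [hondaLog, PowerSeries.coeff_mk, dif_neg h]

theorem coeff_substPS_hondaLog {σ : Type*} {g : MvPowerSeries σ ℚ_[p]}
    (hg : constantCoeff g = 0) (hs : s ≠ 0) {d : σ →₀ ℕ} {N : ℕ} (hN : degree d < N) :
    coeff d (substPS g (hondaLog p s)) =
      ∑ i ∈ Finset.range N, (p : ℚ_[p]) ^ (-(i : ℤ)) * coeff d (g ^ p ^ (s * i)) := by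
  have hp := (Fact.out : p.Prime)
  have hle (k : ℕ) (hk : coeff d (g ^ k) ≠ 0) : k ≤ degree d :=
    not_lt.1 fun h => hk (coeff_pow_eq_zero_of_degree_lt hg h)
  rw [coeff_apply, substPS]
  symm
  refine Finset.sum_bij_ne_zero (fun i _ _ => p ^ (s * i)) (fun i _ hi => ?_)
    (fun i _ _ j _ _ hij => ?_) (fun k hk hk0 => ?_) (fun i _ _ => ?_)
  · exact Finset.mem_range.2 (Nat.lt_succ_of_le (hle _ (right_ne_zero_of_mul hi)))
  · exact Nat.eq_of_mul_eq_mul_left (Nat.pos_of_ne_zero hs) (Nat.pow_right_injective hp.two_le hij)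
  · obtain ⟨i, rfl⟩ : ∃ i, k = p ^ (s * i) := by
      by_contra h
      exact hk0 (by rw [coeff_hondaLog_eq_zero h, zero_mul])
    refine ⟨i, Finset.mem_range.2 ?_, by rwa [coeff_hondaLog_prime_pow hs] at hk0, rfl⟩
    calc i ≤ s * i := Nat.le_mul_of_pos_left i (Nat.pos_of_ne_zero hs)
      _ < p ^ (s * i) := Nat.lt_pow_self hp.one_lt
      _ ≤ degree d := hle _ (right_ne_zero_of_mul hk0)
      _ < N := hN
  · rw [coeff_hondaLog_prime_pow hs]

theorem coeff_substPS_map_hondaLog {σ : Type*} {g : MvPowerSeries σ ℤ_[p]}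
    (hg : constantCoeff g = 0) (hs : s ≠ 0) {d : σ →₀ ℕ} {N : ℕ} (hN : degree d < N) :
    coeff d (substPS (map (PadicInt.Coe.ringHom (p := p)) g) (hondaLog p s)) =
      ∑ i ∈ Finset.range N,
        (p : ℚ_[p]) ^ (-(i : ℤ)) * ((coeff d (g ^ p ^ (s * i)) : ℤ_[p]) : ℚ_[p]) := by
  rw [coeff_substPS_hondaLog (by rw [← coeff_zero_eq_constantCoeff_apply, coeff_map,
    coeff_zero_eq_constantCoeff_apply, hg, map_zero]) hs hN]
  simp_rw [← map_pow, coeff_map]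
  rfl

/-- The coefficient of `xᵈ` in `l(F₀(x, y)) = l(x) + l(y)`, cleared of denominators. -/
theorem sum_pow_mul_coeff_X_pow_add_X_pow_sub_pow_eq_zero {F₀ : MvPowerSeries (Fin 2) ℤ_[p]}
    (hF₀ : constantCoeff F₀ = 0)
    (hlog : substPS (map (PadicInt.Coe.ringHom (p := p)) F₀) (hondaLog p s) =
      substPS (X 0) (hondaLog p s) + substPS (X 1) (hondaLog p s))
    (hs : s ≠ 0) {d : Fin 2 →₀ ℕ} {N : ℕ} (hN : degree d ≤ N) :
    ∑ i ∈ Finset.range (N + 1), (p : ℤ_[p]) ^ (N - i) *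
      coeff d (X 0 ^ p ^ (s * i) + X 1 ^ p ^ (s * i) - F₀ ^ p ^ (s * i)) = 0 := by
  have h := congrArg (coeff d) hlog
  have hN' := Nat.lt_succ_of_le hN
  rw [map_add, ← map_X (PadicInt.Coe.ringHom (p := p)) 0,
    ← map_X (PadicInt.Coe.ringHom (p := p)) 1, coeff_substPS_map_hondaLog hF₀ hs hN',
    coeff_substPS_map_hondaLog (constantCoeff_X 0) hs hN',
    coeff_substPS_map_hondaLog (constantCoeff_X 1) hs hN'] at h
  have hp0 : (p : ℚ_[p]) ≠ 0 := Nat.cast_ne_zero.2 (Fact.out : p.Prime).ne_zero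
  rw [← PadicInt.coe_eq_zero, ← mul_zero ((p : ℚ_[p]) ^ N), ← sub_eq_zero.2 h.symm,
    ← Finset.sum_add_distrib, ← Finset.sum_sub_distrib, Finset.mul_sum, PadicInt.coe_sum]
  refine Finset.sum_congr rfl fun i hi => ?_
  rw [map_sub, map_add]
  push_cast
  rw [← zpow_natCast (p : ℚ_[p]) (N - i), Nat.cast_sub (Nat.le_of_lt_succ (Finset.mem_range.1 hi)),
    zpow_sub₀ hp0, zpow_neg]
  simp only [zpow_natCast]
  ring

end HondaLog

theorem dvd_add_of_sum_pow_mul_eq_zero {R : Type*} [CommRing R] [IsDomain R] {π : R}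
    (hπ : π ≠ 0) {c : ℕ → R} {W : R} {N : ℕ}
    (hsum : ∑ i ∈ Finset.range (N + 2), π ^ (N + 1 - i) * c i = 0)
    (h1 : π ^ 2 ∣ c 1 - π * W) (h2 : ∀ i, 2 ≤ i → π ^ (i + 1) ∣ c i) : π ∣ c 0 + W := by
  rw [Finset.sum_range_succ', Finset.sum_range_succ'] at hsum
  set tail := ∑ i ∈ Finset.range N, π ^ (N + 1 - (i + 1 + 1)) * c (i + 1 + 1)
  have htail : π ^ N * π ^ 2 ∣ tail := Finset.dvd_sum fun i hi => by
    have h := mul_dvd_mul_left (π ^ (N + 1 - (i + 1 + 1))) (h2 (i + 1 + 1) (by omega))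
    rwa [← pow_add, show N + 1 - (i + 1 + 1) + (i + 1 + 1 + 1) = N + 2 by
      simp only [Finset.mem_range] at hi; omega, pow_add] at h
  have hhead : π ^ (N + 1) * (c 0 + W) = -tail - π ^ N * (c 1 - π * W) := by
    simp only [zero_add, Nat.sub_zero, show N + 1 - 1 = N by omega] at hsum
    linear_combination hsum
  refine (mul_dvd_mul_iff_left (pow_ne_zero (N + 1) hπ)).1 ?_
  rw [hhead, pow_succ π N, mul_assoc, ← sq]
  exact dvd_sub htail.neg_right (mul_dvd_mul_left _ h1)

noncomputable def wittW1Series (p : ℕ) [Fact p.Prime] : MvPowerSeries (Fin 2) ℤ_[p] :=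
  MvPolynomial.coeToMvPowerSeries.algHom ℤ_[p] (wittW1 p)

noncomputable def hondaApprox (p : ℕ) [Fact p.Prime] (s : ℕ) : MvPowerSeries (Fin 2) ℤ_[p] :=
  X 0 + X 1 + wittW1Series p ^ p ^ (s - 1)

section Honda

variable {p : ℕ} [Fact p.Prime] {s : ℕ}

theorem X_one_dvd_wittW1Series : (X 1 : MvPowerSeries (Fin 2) ℤ_[p]) ∣ wittW1Series p := by
  simpa [wittW1Series] using
    map_dvd (MvPolynomial.coeToMvPowerSeries.algHom ℤ_[p]) (X_one_dvd_wittW1 p)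

theorem constantCoeff_hondaApprox : constantCoeff (hondaApprox p s) = 0 := by
  obtain ⟨u, hu⟩ := X_one_dvd_wittW1Series (p := p)
  simp [hondaApprox, hu, (Fact.out : p.Prime).ne_zero]

theorem toZMod_coeff_hondaApprox (d : Fin 2 →₀ ℕ) :
    PadicInt.toZMod (coeff d (hondaApprox p s)) =
      MvPolynomial.coeff d (MvPolynomial.X 0 + MvPolynomial.X 1 +
        MvPolynomial.map (Int.castRingHom (ZMod p)) (wittW1 p) ^ p ^ (s - 1)) := by
  have h : hondaApprox p s = MvPolynomial.coeToMvPowerSeries.algHom ℤ_[p]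
      (MvPolynomial.X 0 + MvPolynomial.X 1 + wittW1 p ^ p ^ (s - 1)) := by
    simp [hondaApprox, wittW1Series]
  rw [h, MvPolynomial.coeToMvPowerSeries.algHom_apply, coeff_map, MvPolynomial.coeff_coe,
    eq_intCast, map_intCast, ← eq_intCast (Int.castRingHom (ZMod p)), ← MvPolynomial.coeff_map]
  simp

theorem hondaApprox_pow_sub_add_pow_mem_span (hs : s ≠ 0) {i : ℕ} (hi : i ≠ 0) :
    hondaApprox p s ^ p ^ (s * i) - (X 0 + X 1) ^ p ^ (s * i) ∈
      Ideal.span {C ((p : ℤ_[p]) ^ (i + 1)), X 1 ^ (p ^ (s - 1)) ^ 2} := by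
  refine Ideal.span_pair_le_span_pair ?_ ?_ (add_pow_prime_pow_sub_pow_mem_span Fact.out
    (X 0 + X 1) (wittW1Series p ^ p ^ (s - 1)) (s * i) (s - 1))
  · rw [← map_natCast C, ← map_pow]
    refine map_dvd C (pow_dvd_pow _ ?_)
    obtain ⟨s, rfl⟩ := Nat.exists_eq_succ_of_ne_zero hs
    obtain ⟨i, rfl⟩ := Nat.exists_eq_succ_of_ne_zero hi
    simp only [Nat.succ_eq_add_one, add_mul, mul_add]
    omega
  · rw [sq, ← pow_mul]
    exact pow_dvd_pow_of_dvd X_one_dvd_wittW1Series _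

theorem X_pow_add_X_pow_sub_add_pow_mem_span (hs : s ≠ 0) {i : ℕ} (hi : 2 ≤ i) :
    (X 0 : MvPowerSeries (Fin 2) ℤ_[p]) ^ p ^ (s * i) + X 1 ^ p ^ (s * i) -
      (X 0 + X 1) ^ p ^ (s * i) ∈
      Ideal.span {C ((p : ℤ_[p]) ^ (i + 1)), X 1 ^ (p ^ (s - 1)) ^ 2} := by
  have hle : 2 * (s - 1) ≤ s * i := by
    obtain ⟨i, rfl⟩ := Nat.exists_eq_add_of_le hi
    simp only [mul_add]
    omega
  rw [← neg_sub, sub_add_eq_sub_sub, Ideal.neg_mem_iff, ← pow_mul, mul_comm]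
  refine Ideal.sub_mem _ (Ideal.span_pair_le_span_pair ?_ dvd_rfl
    (add_pow_prime_pow_sub_pow_mem_span Fact.out (X 0) (X 1) (s * i) (2 * (s - 1))))
    (Ideal.mem_of_dvd _ (pow_dvd_pow _ (Nat.pow_le_pow_right (Fact.out : p.Prime).pos hle))
      (Ideal.subset_span (by simp)))
  rw [← map_natCast C, ← map_pow]
  refine map_dvd C (pow_dvd_pow _ ?_)
  obtain ⟨s, rfl⟩ := Nat.exists_eq_succ_of_ne_zero hs
  obtain ⟨i, rfl⟩ := Nat.exists_eq_add_of_le hi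
  simp only [Nat.succ_eq_add_one, add_mul, mul_add]
  omega

theorem X_pow_add_X_pow_sub_add_pow_sub_wittW1Series_mem_span (hs : s ≠ 0) :
    X 0 ^ p ^ s + X 1 ^ p ^ s - (X 0 + X 1) ^ p ^ s -
      (p : MvPowerSeries (Fin 2) ℤ_[p]) * wittW1Series p ^ p ^ (s - 1) ∈
      Ideal.span {C ((p : ℤ_[p]) ^ 2), X 1 ^ (p ^ (s - 1)) ^ 2} := by
  refine Ideal.mem_of_dvd _ ?_ (Ideal.subset_span (Set.mem_insert _ _))
  have h := map_dvd (MvPolynomial.coeToMvPowerSeries.algHom ℤ_[p])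
    (sq_dvd_X_pow_add_X_pow_sub_add_pow_sub_wittW1_pow p (s - 1))
  rw [Nat.sub_add_cancel (Nat.one_le_iff_ne_zero.2 hs)] at h
  simpa only [map_sub, map_add, map_mul, map_pow, map_natCast,
    MvPolynomial.coeToMvPowerSeries_algHom_X, wittW1Series] using h

variable {F₀ : MvPowerSeries (Fin 2) ℤ_[p]}

/-- `E` is the correction term: `0` for `i ≥ 2` and `p w₁^q` for `i = 1`. -/
theorem pow_dvd_coeff_X_pow_add_X_pow_sub_pow_sub (hF₀ : constantCoeff F₀ = 0) (hs : s ≠ 0)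
    {d : Fin 2 →₀ ℕ} (hd : d 1 < (p ^ (s - 1)) ^ 2)
    (ih : ∀ e < d, (p : ℤ_[p]) ∣ coeff e (F₀ - hondaApprox p s)) {i : ℕ} (hi : i ≠ 0)
    {E : MvPowerSeries (Fin 2) ℤ_[p]}
    (hE : X 0 ^ p ^ (s * i) + X 1 ^ p ^ (s * i) - (X 0 + X 1) ^ p ^ (s * i) - E ∈
      Ideal.span {C ((p : ℤ_[p]) ^ (i + 1)), X 1 ^ (p ^ (s - 1)) ^ 2}) :
    (p : ℤ_[p]) ^ (i + 1) ∣
      coeff d (X 0 ^ p ^ (s * i) + X 1 ^ p ^ (s * i) - F₀ ^ p ^ (s * i) - E) := by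
  have hpoly := dvd_coeff_of_mem_span_C_X_pow
    (Ideal.sub_mem _ hE (hondaApprox_pow_sub_add_pow_mem_span hs hi)) hd
  have hF := pow_dvd_coeff_pow_sub_pow_of_lt (Fact.out : p.Prime).one_lt hF₀
    constantCoeff_hondaApprox ih (Nat.mul_ne_zero hs hi)
  have hsi : i + 1 ≤ s * i + 1 :=
    Nat.succ_le_succ (Nat.le_mul_of_pos_left i (Nat.pos_of_ne_zero hs))
  convert dvd_sub hpoly ((pow_dvd_pow _ hsi).trans hF) using 1
  rw [← map_sub]
  congr 1
  ring

theorem prime_dvd_coeff_sub_hondaApprox_of_forall_lt (hF₀ : constantCoeff F₀ = 0)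
    (hlog : substPS (map (PadicInt.Coe.ringHom (p := p)) F₀) (hondaLog p s) =
      substPS (X 0) (hondaLog p s) + substPS (X 1) (hondaLog p s))
    (hs : s ≠ 0) {d : Fin 2 →₀ ℕ} (hd : d 1 < (p ^ (s - 1)) ^ 2)
    (ih : ∀ e < d, (p : ℤ_[p]) ∣ coeff e (F₀ - hondaApprox p s)) :
    (p : ℤ_[p]) ∣ coeff d (F₀ - hondaApprox p s) := by
  have hsum := sum_pow_mul_coeff_X_pow_add_X_pow_sub_pow_eq_zero hF₀ hlog hs (d := d)
    (N := degree d + 1) (Nat.le_succ _)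
  have h1 := pow_dvd_coeff_X_pow_add_X_pow_sub_pow_sub hF₀ hs hd ih one_ne_zero
    (by simpa using X_pow_add_X_pow_sub_add_pow_sub_wittW1Series_mem_span hs)
  rw [map_sub, ← map_natCast C, coeff_C_mul] at h1
  have h2 (i : ℕ) (hi : 2 ≤ i) : (p : ℤ_[p]) ^ (i + 1) ∣
      coeff d (X 0 ^ p ^ (s * i) + X 1 ^ p ^ (s * i) - F₀ ^ p ^ (s * i)) := by
    simpa using pow_dvd_coeff_X_pow_add_X_pow_sub_pow_sub hF₀ hs hd ih (E := 0) (by omega)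
      (by simpa using X_pow_add_X_pow_sub_add_pow_mem_span hs hi)
  convert (dvd_add_of_sum_pow_mul_eq_zero (Nat.cast_ne_zero.2 (Fact.out : p.Prime).ne_zero)
    hsum h1 h2).neg_right using 1
  simp only [hondaApprox, map_sub, map_add, mul_zero, pow_zero, pow_one]
  ring

theorem prime_dvd_coeff_sub_hondaApprox (hF₀ : constantCoeff F₀ = 0)
    (hlog : substPS (map (PadicInt.Coe.ringHom (p := p)) F₀) (hondaLog p s) =
      substPS (X 0) (hondaLog p s) + substPS (X 1) (hondaLog p s))
    (hs : s ≠ 0) (d : Fin 2 →₀ ℕ) (hd : d 1 < (p ^ (s - 1)) ^ 2) :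
    (p : ℤ_[p]) ∣ coeff d (F₀ - hondaApprox p s) := by
  induction d using WellFoundedLT.induction with
  | _ d ih =>
    exact prime_dvd_coeff_sub_hondaApprox_of_forall_lt hF₀ hlog hs hd fun e he =>
      ih e he ((Finsupp.le_def.1 he.le 1).trans_lt hd)

end Honda

/-- For `s > 1` and `q = p^(s-1)`,
`F(x,y) ≡ x + y + w̄₁(x,y)^q mod (y^(q²))`, where `w̄₁` is the mod `p` reduction of the
first Witt addition polynomial `w₁(x,y) = -Σ_{0<j<p} (1/p) C(p,j) xʲ y^{p-j}`. -/
theorem honda_congr_mod_y_q_sq (p : ℕ) [Fact p.Prime] (s : ℕ) (hs : 1 < s)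
    (F : MvPowerSeries (Fin 2) (ZMod p)) (hF : IsHondaFGL p s F) :
    ∀ i j : ℕ, j < (p ^ (s - 1)) ^ 2 →
      MvPowerSeries.coeff (Finsupp.single (0 : Fin 2) i + Finsupp.single 1 j) F =
        MvPolynomial.coeff (Finsupp.single (0 : Fin 2) i + Finsupp.single 1 j)
          (MvPolynomial.X 0 + MvPolynomial.X 1 +
            (MvPolynomial.map (Int.castRingHom (ZMod p)) (wittW1 p)) ^ (p ^ (s - 1))
            : MvPolynomial (Fin 2) (ZMod p)) := by
  intro i j hj
  obtain ⟨F₀, hF₀, hlog, rfl⟩ := hF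
  obtain ⟨c, hc⟩ := prime_dvd_coeff_sub_hondaApprox hF₀ hlog (by omega)
    (single (0 : Fin 2) i + single 1 j) (by simpa using hj)
  rw [coeff_map, ← toZMod_coeff_hondaApprox, ← sub_eq_zero, ← map_sub, ← map_sub, hc, map_mul,
    map_natCast, ZMod.natCast_self, zero_mul]
end
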